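/- Controllability does not imply conditional controllability: let L = \overline{{au}} ∥ \overline{{bu}} over alphabets E₁ = {a,u}, E₂ = {b,u}, E_k = {u}, with E_u = {u}, so L = \overline{{abu, bau}}. Then K = {a} is controllable with respect to L and E_u, both K and \overline{K} are conditionally decomposable with respect to E₁, E₂, E_k, but P_k(K) = {ε} is not controllable with respect to \overline{{u}} = {ε, u} and {u}. -/

import Mathlib

open scoped Classical

/-- Natural projection: erase letters not in `A`. -/
noncomputable def proj {Ev : Type*} (A : Set Ev) (w : List Ev) : List Ev :=
  w.filter (fun a => decide (a ∈ A))

/-- Projection of a language. -/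
noncomputable def projL {Ev : Type*} (A : Set Ev) (L : Set (List Ev)) : Set (List Ev) :=
  proj A '' L

/-- Words over an alphabet `A`, i.e., `A*`. -/
def star {Ev : Type*} (A : Set Ev) : Set (List Ev) := {w | ∀ a ∈ w, a ∈ A}

/-- Synchronous product of `L₁ ⊆ A*` and `L₂ ⊆ B*`. -/
noncomputable def sync {Ev : Type*} (A B : Set Ev) (L1 L2 : Set (List Ev)) :
    Set (List Ev) :=
  {w | w ∈ star (A ∪ B) ∧ proj A w ∈ L1 ∧ proj B w ∈ L2}

/-- Prefix closure of a language. -/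
def prefixCl {Ev : Type*} (L : Set (List Ev)) : Set (List Ev) := {w | ∃ v, w ++ v ∈ L}

/-- Controllability of `K` with respect to (prefix-closed) `L` and uncontrollable events `Eu`. -/
def controllable {Ev : Type*} (K L : Set (List Ev)) (Eu : Set Ev) : Prop :=
  ∀ s ∈ prefixCl K, ∀ u ∈ Eu, s ++ [u] ∈ L → s ++ [u] ∈ prefixCl K

/-- Supremal controllable sublanguage of `K` w.r.t. `N` and `U`. -/
noncomputable def supC {Ev : Type*} (K N : Set (List Ev)) (U : Set Ev) : Set (List Ev) :=
  ⋃₀ {M | M ⊆ K ∧ controllable M N U}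

/-- `proj A` is an `L`-observer. -/
def observer {Ev : Type*} (A : Set Ev) (L : Set (List Ev)) : Prop :=
  ∀ t ∈ projL A L, ∀ s ∈ prefixCl L, proj A s <+: t →
    ∃ u, s ++ u ∈ L ∧ proj A (s ++ u) = t

/-- `proj A` is locally control consistent (LCC) for `L` (w.r.t. uncontrollable events `Eu`). -/
def lcc {Ev : Type*} (A Eu : Set Ev) (L : Set (List Ev)) : Prop :=
  ∀ s ∈ L, ∀ σ ∈ A ∩ Eu, proj A s ++ [σ] ∈ projL A L →
    (∃ u, (∀ a ∈ u, a ∉ A) ∧ s ++ u ++ [σ] ∈ L) →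
    ∃ u, (∀ a ∈ u, a ∈ Eu ∧ a ∉ A) ∧ s ++ u ++ [σ] ∈ L

/-- Events for the counterexample of STATEMENT 7. -/
inductive Ev7 where
  | a | b | u
deriving DecidableEq

/-!
The synchronous product `L` is computed by a finite search: a word over `E₁ ∪ E₂` is at most
as long as its two projections together, hence has length at most four. Since `K = {a}` lives
over `(E₁ ∪ E_k) \ (E₂ ∪ E_k)`, its projection to `E₂ ∪ E_k` is `{ε}`, and synchronising a
language over `A \ B` with `{ε}` over `B` returns it; this gives both decompositions. `K` is
controllable because neither `u` nor `au` is a prefix of `abu` or `bau`, whereas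
`P_k(K) = {ε}` is not, as `u ∈ \overline{{u}}`.
-/

section Languages

variable {Ev : Type*} {A B : Set Ev}

lemma proj_cons_of_mem {x : Ev} (hx : x ∈ A) (w : List Ev) : proj A (x :: w) = x :: proj A w := by
  simp [proj, hx]

lemma proj_cons_of_notMem {x : Ev} (hx : x ∉ A) (w : List Ev) : proj A (x :: w) = proj A w := by
  simp [proj, hx]

lemma proj_eq_nil_iff {w : List Ev} : proj A w = [] ↔ ∀ x ∈ w, x ∉ A := by
  simp [proj, List.filter_eq_nil_iff]

lemma proj_eq_self_iff {w : List Ev} : proj A w = w ↔ ∀ x ∈ w, x ∈ A := by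
  simp [proj, List.filter_eq_self]

lemma length_proj_le_length_proj_cons (x : Ev) (w : List Ev) :
    (proj A w).length ≤ (proj A (x :: w)).length := by
  by_cases hx : x ∈ A
  · simp [proj_cons_of_mem hx]
  · simp [proj_cons_of_notMem hx]

lemma length_le_length_proj_add_length_proj {w : List Ev} (hw : w ∈ star (A ∪ B)) :
    w.length ≤ (proj A w).length + (proj B w).length := by
  induction w with
  | nil => simp
  | cons x w ih =>
    have ih := ih fun y hy => hw y (List.mem_cons_of_mem x hy)
    rcases hw x List.mem_cons_self with hx | hx
    · have := length_proj_le_length_proj_cons (A := B) x w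
      simp only [proj_cons_of_mem hx, List.length_cons]
      omega
    · have := length_proj_le_length_proj_cons (A := A) x w
      simp only [proj_cons_of_mem hx, List.length_cons]
      omega

lemma mem_star_of_forall_mem (hA : ∀ x, x ∈ A) (w : List Ev) : w ∈ star A :=
  fun x _ => hA x

lemma projL_singleton (w : List Ev) : projL A {w} = {proj A w} := Set.image_singleton

lemma mem_prefixCl_iff {L : Set (List Ev)} {w : List Ev} :
    w ∈ prefixCl L ↔ ∃ v ∈ L, w <+: v := by
  simp only [prefixCl, Set.mem_ofPred_eq, List.IsPrefix]
  aesop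

lemma length_le_of_mem_prefixCl_singleton {v w : List Ev} (hw : w ∈ prefixCl {v}) :
    w.length ≤ v.length := by
  obtain ⟨_, rfl, hwv⟩ := mem_prefixCl_iff.1 hw
  exact hwv.length_le

lemma prefixCl_singleton_nil : prefixCl ({[]} : Set (List Ev)) = {[]} := by
  ext w
  simp [mem_prefixCl_iff]

lemma proj_append (w v : List Ev) : proj A (w ++ v) = proj A w ++ proj A v :=
  List.filter_append w v

lemma mem_prefixCl_of_append_mem {L : Set (List Ev)} {w v : List Ev} (h : w ++ v ∈ prefixCl L) :
    w ∈ prefixCl L := by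
  obtain ⟨t, ht⟩ := h
  exact ⟨v ++ t, by rwa [← List.append_assoc]⟩

lemma prefixCl_subset_sync_prefixCl {M L1 L2 : Set (List Ev)}
    (hM : M ⊆ sync A B (prefixCl L1) (prefixCl L2)) :
    prefixCl M ⊆ sync A B (prefixCl L1) (prefixCl L2) := by
  rintro w ⟨v, hwv⟩
  obtain ⟨hs, h1, h2⟩ := hM hwv
  rw [proj_append] at h1 h2
  exact ⟨fun x hx => hs x (List.mem_append_left v hx), mem_prefixCl_of_append_mem h1,
    mem_prefixCl_of_append_mem h2⟩

lemma sync_singleton_nil {L : Set (List Ev)} (hL : ∀ w ∈ L, ∀ x ∈ w, x ∈ A ∧ x ∉ B) :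
    sync A B L {[]} = L := by
  ext w
  constructor
  · rintro ⟨hw, hA, hB⟩
    have hB : ∀ x ∈ w, x ∉ B := proj_eq_nil_iff.1 hB
    rwa [proj_eq_self_iff.2 fun x hx => (hw x hx).resolve_right (hB x hx)] at hA
  · intro hw
    refine ⟨fun x hx => Or.inl (hL w hw x hx).1, ?_, ?_⟩
    · rwa [proj_eq_self_iff.2 fun x hx => (hL w hw x hx).1]
    · exact proj_eq_nil_iff.2 fun x hx => (hL w hw x hx).2

end Languages

namespace Ev7

lemma sync_prefixCl_au_bu :
    sync {a, u} {b, u} (prefixCl {[a, u]}) (prefixCl {[b, u]}) =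
      prefixCl ({[a, b, u], [b, a, u]} : Set (List Ev7)) := by
  refine subset_antisymm ?_ (prefixCl_subset_sync_prefixCl ?_)
  · rintro w ⟨hw, h1, h2⟩
    have hlen : w.length ≤ 4 := (length_le_length_proj_add_length_proj hw).trans
      (add_le_add (length_le_of_mem_prefixCl_singleton h1) (length_le_of_mem_prefixCl_singleton h2))
    rcases w with _ | ⟨x, _ | ⟨y, _ | ⟨z, _ | ⟨t, _ | ⟨_, _⟩⟩⟩⟩⟩
    · simp [mem_prefixCl_iff]
    · cases x <;> simp [proj, mem_prefixCl_iff] at h1 h2 ⊢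
    · cases x <;> cases y <;> simp [proj, mem_prefixCl_iff] at h1 h2 ⊢
    · cases x <;> cases y <;> cases z <;> simp [proj, mem_prefixCl_iff] at h1 h2 ⊢
    · cases x <;> cases y <;> cases z <;> cases t <;> simp [proj, mem_prefixCl_iff] at h1 h2 ⊢
    · simp only [List.length_cons] at hlen
      omega
  · rintro w (rfl | rfl) <;>
      exact ⟨mem_star_of_forall_mem (fun x => by cases x <;> simp) _,
        by simp [proj, mem_prefixCl_iff], by simp [proj, mem_prefixCl_iff]⟩

end Ev7

open Ev7 in
/-- controllability does not imply conditional controllability. -/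
theorem stmt7 :
    let E1 : Set Ev7 := {a, u}
    let E2 : Set Ev7 := {b, u}
    let Ek : Set Ev7 := {u}
    let L : Set (List Ev7) :=
      sync E1 E2 (prefixCl {[a, u]}) (prefixCl {[b, u]})
    let K : Set (List Ev7) := {[a]}
    L = prefixCl {[a, b, u], [b, a, u]} ∧
    controllable K L {u} ∧
    K = sync (E1 ∪ Ek) (E2 ∪ Ek) (projL (E1 ∪ Ek) K) (projL (E2 ∪ Ek) K) ∧
    prefixCl K = sync (E1 ∪ Ek) (E2 ∪ Ek)
      (prefixCl (projL (E1 ∪ Ek) K)) (prefixCl (projL (E2 ∪ Ek) K)) ∧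
    projL Ek K = {([] : List Ev7)} ∧
    prefixCl ({[u]} : Set (List Ev7)) = {[], [u]} ∧
    ¬ controllable (projL Ek K) (prefixCl ({[u]} : Set (List Ev7))) {u} := by
  intro E1 E2 Ek L K
  have hPk : projL Ek K = {[]} := by simp [projL_singleton, K, Ek, proj]
  have hP1 : projL (E1 ∪ Ek) K = {[a]} := by simp [projL_singleton, K, E1, Ek, proj]
  have hP2 : projL (E2 ∪ Ek) K = {[]} := by simp [projL_singleton, K, E2, Ek, proj]
  have hK : ∀ w ∈ prefixCl K, ∀ x ∈ w, x ∈ E1 ∪ Ek ∧ x ∉ E2 ∪ Ek := by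
    intro w hw x hx
    obtain ⟨_, rfl, hw⟩ := mem_prefixCl_iff.1 hw
    obtain rfl : x = a := by simpa using hw.subset hx
    simp [E1, E2, Ek]
  refine ⟨sync_prefixCl_au_bu, ?_, ?_, ?_, hPk, ?_, ?_⟩
  · rintro s hs σ rfl hsσ
    rw [show L = _ from sync_prefixCl_au_bu] at hsσ
    obtain ⟨_, rfl, hs⟩ := mem_prefixCl_iff.1 hs
    rcases List.prefix_cons_iff.1 hs with rfl | ⟨t, rfl, ht⟩
    · simp [mem_prefixCl_iff] at hsσ
    · simp [List.prefix_nil.1 ht, mem_prefixCl_iff] at hsσ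
  · rw [hP1, hP2, sync_singleton_nil fun w hw => hK w ⟨[], by simpa⟩]
  · rw [hP1, hP2, prefixCl_singleton_nil, sync_singleton_nil hK]
  · ext w
    simp [mem_prefixCl_iff, List.prefix_cons_iff]
  · rw [hPk]
    intro hc
    have hu := hc [] (by simp [mem_prefixCl_iff]) u rfl (by simp [mem_prefixCl_iff])
    simp [prefixCl_singleton_nil] at hu
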